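/- In the algebra A' = k⟨x,y,z⟩/(yz−αzy+x², zx−αxz, xy−αyx) with α³ ≠ 0,1, the element g := xyz + (1−α³)^{−1}·x³ lies in the center of A': it commutes with x, y, and z. -/
import Mathlib


noncomputable section

/-- Defining relations of the Type S' Calabi–Yau quantum polynomial algebra
`A' = k⟨x,y,z⟩/(yz - αzy + x², zx - αxz, xy - αyx)`. -/
inductive SRel {k : Type} [Field k] (α : k) :
    FreeAlgebra k (Fin 3) → FreeAlgebra k (Fin 3) → Prop
  | g1 : SRel α (FreeAlgebra.ι k 1 * FreeAlgebra.ι k 2)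
      (α • (FreeAlgebra.ι k 2 * FreeAlgebra.ι k 1) - FreeAlgebra.ι k 0 * FreeAlgebra.ι k 0)
  | g2 : SRel α (FreeAlgebra.ι k 2 * FreeAlgebra.ι k 0)
      (α • (FreeAlgebra.ι k 0 * FreeAlgebra.ι k 2))
  | g3 : SRel α (FreeAlgebra.ι k 0 * FreeAlgebra.ι k 1)
      (α • (FreeAlgebra.ι k 1 * FreeAlgebra.ι k 0))

/-- The image of `x` in `A'`. -/
def SX {k : Type} [Field k] (α : k) : RingQuot (SRel α) :=
  RingQuot.mkAlgHom k (SRel α) (FreeAlgebra.ι k 0)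

/-- The image of `y` in `A'`. -/
def SY {k : Type} [Field k] (α : k) : RingQuot (SRel α) :=
  RingQuot.mkAlgHom k (SRel α) (FreeAlgebra.ι k 1)

/-- The image of `z` in `A'`. -/
def SZ {k : Type} [Field k] (α : k) : RingQuot (SRel α) :=
  RingQuot.mkAlgHom k (SRel α) (FreeAlgebra.ι k 2)

/-- The central element `g = xyz + (1-α³)⁻¹ x³` of `A'`. -/
def SG {k : Type} [Field k] (α : k) : RingQuot (SRel α) :=
  SX α * SY α * SZ α + (1 - α ^ 3)⁻¹ • (SX α) ^ 3

section auxLemmas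
variable {k : Type} [Field k] (α : k)

lemma hyz : SY α * SZ α = α • (SZ α * SY α) - SX α * SX α := by
  have := RingQuot.mkAlgHom_rel k (SRel.g1 (α := α))
  simpa [SX, SY, SZ, map_mul, map_smul, map_sub] using this

lemma hzx : SZ α * SX α = α • (SX α * SZ α) := by
  have := RingQuot.mkAlgHom_rel k (SRel.g2 (α := α))
  simpa [SX, SZ, map_mul, map_smul] using this

lemma hxy : SX α * SY α = α • (SY α * SX α) := by
  have := RingQuot.mkAlgHom_rel k (SRel.g3 (α := α))
  simpa [SX, SY, map_mul, map_smul] using this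

end auxLemmas

theorem stmt4 {k : Type} [Field k] [IsAlgClosed k] [CharZero k] (α : k)
    (hα : α ≠ 0) (hα3 : α ^ 3 ≠ 1) :
    SG α ∈ Subalgebra.center k (RingQuot (SRel α)) ∧
    SG α * SX α = SX α * SG α ∧
    SG α * SY α = SY α * SG α ∧
    SG α * SZ α = SZ α * SG α := by
  have hyx : SY α * SX α = α⁻¹ • (SX α * SY α) := by
    rw [hxy α, smul_smul, inv_mul_cancel₀ hα, one_smul]
  have hzy : SZ α * SY α = α⁻¹ • (SY α * SZ α) + α⁻¹ • (SX α * SX α) := by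
    have h := hyz α
    rw [eq_sub_iff_add_eq] at h
    rw [← smul_add, eq_inv_smul_iff₀ hα]
    exact h.symm
  have hyx' : ∀ w, SY α * (SX α * w) = α⁻¹ • (SX α * (SY α * w)) := fun w => by
    rw [← mul_assoc, hyx, smul_mul_assoc, mul_assoc]
  have hzx' : ∀ w, SZ α * (SX α * w) = α • (SX α * (SZ α * w)) := fun w => by
    rw [← mul_assoc, hzx α, smul_mul_assoc, mul_assoc]
  have hzy' : ∀ w, SZ α * (SY α * w) =
      α⁻¹ • (SY α * (SZ α * w)) + α⁻¹ • (SX α * (SX α * w)) := fun w => by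
    rw [← mul_assoc, hzy, add_mul, smul_mul_assoc, smul_mul_assoc, mul_assoc, mul_assoc]
  have hne : (1 : k) - α ^ 3 ≠ 0 := sub_ne_zero.mpr (Ne.symm hα3)
  have h2 : α ^ 3 - α ^ 6 ≠ 0 := by
    have : α ^ 3 - α ^ 6 = α ^ 3 * (1 - α ^ 3) := by ring
    rw [this]
    exact mul_ne_zero (pow_ne_zero 3 hα) hne
  have hne' : (1 : k) - α * (α * α) ≠ 0 := by
    have : α * (α * α) = α ^ 3 := by ring
    rw [this]; exact hne
  have hgx : SG α * SX α = SX α * SG α := by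
    simp only [SG, add_mul, mul_add, smul_mul_assoc, mul_smul_comm, pow_succ, pow_zero, one_mul,
      mul_assoc, hzx α, hyx, hzx', hyx', smul_smul, inv_mul_cancel₀ hα, mul_inv_cancel₀ hα,
      one_smul]
  have hgy : SG α * SY α = SY α * SG α := by
    simp only [SG, add_mul, mul_add, smul_mul_assoc, mul_smul_comm, pow_succ, pow_zero, one_mul,
      mul_assoc, hzy, hzy', hyx, hyx', smul_smul, smul_add, mul_add]
    match_scalars
    all_goals (try field_simp [hα, hne, hne', h2])
    all_goals ring
  have hgz : SG α * SZ α = SZ α * SG α := by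
    simp only [SG, add_mul, mul_add, smul_mul_assoc, mul_smul_comm, pow_succ, pow_zero, one_mul,
      mul_assoc, hzy, hzy', hzx α, hzx', smul_smul, smul_add, mul_add]
    match_scalars
    all_goals (try field_simp [hα, hne, hne', h2])
    all_goals ring
  refine ⟨?_, hgx, hgy, hgz⟩
  rw [Subalgebra.mem_center_iff]
  intro b
  obtain ⟨a, rfl⟩ := RingQuot.mkAlgHom_surjective k (SRel α) b
  induction a using FreeAlgebra.induction with
  | grade0 r => rw [AlgHom.commutes]; exact Algebra.commutes r _
  | grade1 i =>
      fin_cases i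
      · exact hgx.symm
      · exact hgy.symm
      · exact hgz.symm
  | mul a b ha hb => rw [map_mul, mul_assoc, hb, ← mul_assoc, ha, mul_assoc]
  | add a b ha hb => rw [map_add, add_mul, mul_add, ha, hb]
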